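/- (Theorem 1, stable semantics.) For every valuation v ⊆ 𝒫: v ⊨ Stable if and only if E(v) is a stable extension of the AF (A_v, R_v). Moreover, for every AF (A,R), the set of stable extensions of (A,R) equals {E(v) : (v_(A,R), v) ∈ ‖makeExt^st‖}, where makeExt^st = vary(IN_U); Stable?. -/

import Mathlib

noncomputable section

namespace DLPA

/-- Propositional variables: awareness, acceptance, attack, auxiliary acceptance
copies, plus countably many further auxiliary variables. -/
inductive PVar (U : Type) : Type
  | aw : U → PVar U
  | inn : U → PVar U
  | att : U → U → PVar U
  | inn' : U → PVar U
  | aux : Nat → PVar U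

-- DL-PA formulas and programs, by mutual recursion.
mutual
  inductive Form (U : Type) : Type
    | var : PVar U → Form U
    | neg : Form U → Form U
    | conj : Form U → Form U → Form U
    | box : Prog U → Form U → Form U
  inductive Prog (U : Type) : Type
    | add : PVar U → Prog U           -- +p
    | rem : PVar U → Prog U           -- −p
    | test : Form U → Prog U          -- φ?
    | seq : Prog U → Prog U → Prog U
    | choice : Prog U → Prog U → Prog U
    | conv : Prog U → Prog U
end

variable {U : Type}

/-- A valuation is a set of propositional variables. -/
abbrev Val (U : Type) := Set (PVar U)

-- Satisfaction of formulas and interpretation of programs, by mutual recursion.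
mutual
  def Sat : Val U → Form U → Prop
    | v, Form.var p => p ∈ v
    | v, Form.neg φ => ¬ Sat v φ
    | v, Form.conj φ ψ => Sat v φ ∧ Sat v ψ
    | v, Form.box π φ => ∀ w, Rel π v w → Sat w φ
  def Rel : Prog U → Val U → Val U → Prop
    | Prog.add p, v, w => w = v ∪ {p}
    | Prog.rem p, v, w => w = v \ {p}
    | Prog.test φ, v, w => w = v ∧ Sat v φ
    | Prog.seq π₁ π₂, v, w => ∃ u, Rel π₁ v u ∧ Rel π₂ u w
    | Prog.choice π₁ π₂, v, w => Rel π₁ v w ∨ Rel π₂ v w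
    | Prog.conv π, v, w => Rel π w v
end

def Form.falsum : Form U := Form.conj (Form.var (PVar.aux 0)) (Form.neg (Form.var (PVar.aux 0)))
def Form.top : Form U := Form.neg Form.falsum
def Form.impl (φ ψ : Form U) : Form U := Form.neg (Form.conj φ (Form.neg ψ))
def Form.disj (φ ψ : Form U) : Form U := Form.neg (Form.conj (Form.neg φ) (Form.neg ψ))
def Form.equiv (φ ψ : Form U) : Form U := Form.conj (Form.impl φ ψ) (Form.impl ψ φ)
def Form.dia (π : Prog U) (φ : Form U) : Form U := Form.neg (Form.box π (Form.neg φ))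
def Prog.skip : Prog U := Prog.test Form.top

/-- Sequential composition of a list of programs (`skip` for the empty list). -/
def seqList {β : Type} (f : β → Prog U) : List β → Prog U
  | [] => Prog.skip
  | p :: ps => Prog.seq (f p) (seqList f ps)

/-- Nondeterministic composition of a list of programs (`skip` for the empty list). -/
def unionList {β : Type} (f : β → Prog U) : List β → Prog U
  | [] => Prog.skip
  | [p] => f p
  | p :: ps => Prog.choice (f p) (unionList f ps)

def mkTrueOne (L : List (PVar U)) : Prog U :=
  unionList (fun p => Prog.seq (Prog.test (Form.neg (Form.var p))) (Prog.add p)) L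
def mkFalseOne (L : List (PVar U)) : Prog U :=
  unionList (fun p => Prog.seq (Prog.test (Form.var p)) (Prog.rem p)) L
def mkTrueSome (L : List (PVar U)) : Prog U :=
  seqList (fun p => Prog.choice (Prog.add p) Prog.skip) L
def mkFalseSome (L : List (PVar U)) : Prog U :=
  seqList (fun p => Prog.choice (Prog.rem p) Prog.skip) L
def vary (L : List (PVar U)) : Prog U :=
  seqList (fun p => Prog.choice (Prog.add p) (Prog.rem p)) L
/-- dis(ATT_R): for each pair (x,y) in the list, make true att_{x,y} or att_{y,x}. -/
def dis (L : List (U × U)) : Prog U :=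
  seqList (fun q => Prog.choice (Prog.add (PVar.att q.1 q.2)) (Prog.add (PVar.att q.2 q.1))) L

def conjList : List (Form U) → Form U
  | [] => Form.top
  | φ :: φs => Form.conj φ (conjList φs)
def disjList : List (Form U) → Form U
  | [] => Form.falsum
  | φ :: φs => Form.disj φ (disjList φs)

/-- The elements of a finite universe in a fixed order. -/
def enum (U : Type) [Fintype U] : List U := Finset.univ.toList

def bigConj [Fintype U] (f : U → Form U) : Form U := conjList ((enum U).map f)
def bigDisj [Fintype U] (f : U → Form U) : Form U := disjList ((enum U).map f)

def INlist (U : Type) [Fintype U] : List (PVar U) := (enum U).map PVar.inn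

/-- copy(IN_U) copies the value of in_x to in'_x, for every x ∈ U. -/
def copyIN (U : Type) [Fintype U] : Prog U :=
  seqList (fun x => Prog.choice
      (Prog.seq (Prog.test (Form.var (PVar.inn x))) (Prog.add (PVar.inn' x)))
      (Prog.seq (Prog.test (Form.neg (Form.var (PVar.inn x)))) (Prog.rem (PVar.inn' x))))
    (enum U)

def Well (U : Type) [Fintype U] : Form U :=
  bigConj (fun x => Form.impl (Form.var (PVar.inn x)) (Form.var (PVar.aw x)))

def ConFree (U : Type) [Fintype U] : Form U :=
  Form.conj (Well U) (bigConj fun x => bigConj fun y =>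
    Form.neg (Form.conj (Form.var (PVar.inn x))
      (Form.conj (Form.var (PVar.inn y)) (Form.var (PVar.att x y)))))

def AdmissibleF (U : Type) [Fintype U] : Form U :=
  Form.conj (ConFree U) (bigConj fun x => Form.impl (Form.var (PVar.inn x))
    (bigConj fun y => Form.impl (Form.conj (Form.var (PVar.aw y)) (Form.var (PVar.att y x)))
      (bigDisj fun z => Form.conj (Form.var (PVar.inn z)) (Form.var (PVar.att z y)))))

def StableF (U : Type) [Fintype U] : Form U :=
  Form.conj (Well U) (bigConj fun x => Form.impl (Form.var (PVar.aw x))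
    (Form.equiv (Form.var (PVar.inn x))
      (Form.neg (bigDisj fun y => Form.conj (Form.var (PVar.inn y)) (Form.var (PVar.att y x))))))

def CompleteF (U : Type) [Fintype U] : Form U :=
  Form.conj (ConFree U) (bigConj fun x => Form.equiv (Form.var (PVar.inn x))
    (bigConj fun y => Form.impl (Form.conj (Form.var (PVar.aw y)) (Form.var (PVar.att y x)))
      (bigDisj fun z => Form.conj (Form.var (PVar.inn z)) (Form.var (PVar.att z y)))))

def GroundedF (U : Type) [Fintype U] : Form U :=
  Form.conj (CompleteF U)
    (Form.box (Prog.seq (mkFalseOne (INlist U)) (mkFalseSome (INlist U))) (Form.neg (CompleteF U)))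

def PreferredF (U : Type) [Fintype U] : Form U :=
  Form.conj (AdmissibleF U)
    (Form.box (Prog.seq (mkTrueOne (INlist U)) (mkTrueSome (INlist U))) (Form.neg (AdmissibleF U)))

def NaiveF (U : Type) [Fintype U] : Form U :=
  Form.conj (ConFree U) (Form.box (mkTrueOne (INlist U)) (Form.neg (ConFree U)))

def IncludedInCp (U : Type) [Fintype U] : Form U :=
  bigConj fun x => Form.impl
    (Form.disj (Form.var (PVar.inn x)) (Form.conj (Form.var (PVar.aw x))
      (bigDisj fun y => Form.conj (Form.var (PVar.inn y)) (Form.var (PVar.att y x)))))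
    (Form.disj (Form.var (PVar.inn' x)) (Form.conj (Form.var (PVar.aw x))
      (bigDisj fun y => Form.conj (Form.var (PVar.inn' y)) (Form.var (PVar.att y x)))))

def IncludesCp (U : Type) [Fintype U] : Form U :=
  bigConj fun x => Form.impl
    (Form.disj (Form.var (PVar.inn' x)) (Form.conj (Form.var (PVar.aw x))
      (bigDisj fun y => Form.conj (Form.var (PVar.inn' y)) (Form.var (PVar.att y x)))))
    (Form.disj (Form.var (PVar.inn x)) (Form.conj (Form.var (PVar.aw x))
      (bigDisj fun y => Form.conj (Form.var (PVar.inn y)) (Form.var (PVar.att y x)))))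

/-- makeExt^σ = vary(IN_U); φ_σ? -/
def makeExt (U : Type) [Fintype U] (φ : Form U) : Prog U :=
  Prog.seq (vary (INlist U)) (Prog.test φ)

def SemiStableF (U : Type) [Fintype U] : Form U :=
  Form.conj (CompleteF U)
    (Form.box (Prog.seq (copyIN U) (makeExt U (CompleteF U)))
      (Form.impl (IncludesCp U) (IncludedInCp U)))

/-- A_v -/
def Av (v : Val U) : Set U := {x | PVar.aw x ∈ v}
/-- R_v -/
def Rv (v : Val U) : Set (U × U) := {q | q.1 ∈ Av v ∧ q.2 ∈ Av v ∧ PVar.att q.1 q.2 ∈ v}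
/-- E(v) -/
def Ev (v : Val U) : Set U := {x | PVar.inn x ∈ v}
/-- {x ∈ U : in'_x ∈ v} -/
def Cv (v : Val U) : Set U := {x | PVar.inn' x ∈ v}
/-- v_(A,R) = AW_A ∪ ATT_R -/
def valOf (A : Set U) (R : Set (U × U)) : Val U :=
  (PVar.aw '' A) ∪ ((fun q : U × U => PVar.att q.1 q.2) '' R)

/-- E⁺, the set of arguments of A attacked by E in (A,R). -/
def attacked (A : Set U) (R : Set (U × U)) (E : Set U) : Set U :=
  {x ∈ A | ∃ y ∈ E, (y, x) ∈ R}
/-- E⊕ = E ∪ E⁺, the range of E. -/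
def rangeOf (A : Set U) (R : Set (U × U)) (E : Set U) : Set U :=
  E ∪ attacked A R E

def IsConflictFree (A : Set U) (R : Set (U × U)) (E : Set U) : Prop :=
  E ⊆ A ∧ E ∩ attacked A R E = ∅
def Defends (A : Set U) (R : Set (U × U)) (E : Set U) (a : U) : Prop :=
  ∀ x ∈ A, (x, a) ∈ R → x ∈ attacked A R E
def IsAdmissibleExt (A : Set U) (R : Set (U × U)) (E : Set U) : Prop :=
  IsConflictFree A R E ∧ ∀ a ∈ E, Defends A R E a
def IsStableExt (A : Set U) (R : Set (U × U)) (E : Set U) : Prop :=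
  IsConflictFree A R E ∧ A \ E ⊆ attacked A R E
def IsCompleteExt (A : Set U) (R : Set (U × U)) (E : Set U) : Prop :=
  IsConflictFree A R E ∧ E = {a ∈ A | Defends A R E a}
def IsGroundedExt (A : Set U) (R : Set (U × U)) (E : Set U) : Prop :=
  IsCompleteExt A R E ∧ ∀ E', IsCompleteExt A R E' → E' ⊆ E → E' = E
def IsPreferredExt (A : Set U) (R : Set (U × U)) (E : Set U) : Prop :=
  IsCompleteExt A R E ∧ ∀ E', IsCompleteExt A R E' → E ⊆ E' → E' = E
def IsNaiveExt (A : Set U) (R : Set (U × U)) (E : Set U) : Prop :=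
  IsConflictFree A R E ∧ ∀ E', IsConflictFree A R E' → E ⊆ E' → E' = E
def IsSemiStableExt (A : Set U) (R : Set (U × U)) (E : Set U) : Prop :=
  IsCompleteExt A R E ∧ ¬ ∃ E', IsCompleteExt A R E' ∧ rangeOf A R E ⊂ rangeOf A R E'

end DLPA

end

/-! `Stable` unfolds, through the semantics of the big conjunctions and disjunctions, to the
fixpoint description of stable extensions: `E ⊆ A`, and an argument of `A` lies in `E` iff no
member of `E` attacks it. The program `makeExt^st` changes only the acceptance variables, so
from `v_(A,R)` it reaches exactly the valuations `v` with `A_v = A`, `R_v = R` (this needs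
`R ⊆ A × A`) and an arbitrary `E(v)` satisfying `Stable`. -/

namespace DLPA

variable {U : Type}

section Semantics

lemma sat_var (v : Val U) (p : PVar U) : Sat v (Form.var p) ↔ p ∈ v := Iff.rfl

lemma sat_neg (v : Val U) (φ : Form U) : Sat v (Form.neg φ) ↔ ¬ Sat v φ := Iff.rfl

lemma sat_conj (v : Val U) (φ ψ : Form U) : Sat v (Form.conj φ ψ) ↔ Sat v φ ∧ Sat v ψ := Iff.rfl

lemma sat_falsum (v : Val U) : ¬ Sat v Form.falsum := fun h => h.2 h.1

lemma sat_top (v : Val U) : Sat v Form.top := sat_falsum v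

lemma sat_impl (v : Val U) (φ ψ : Form U) : Sat v (Form.impl φ ψ) ↔ (Sat v φ → Sat v ψ) := by
  show ¬ (Sat v φ ∧ ¬ Sat v ψ) ↔ _
  tauto

lemma sat_disj (v : Val U) (φ ψ : Form U) : Sat v (Form.disj φ ψ) ↔ (Sat v φ ∨ Sat v ψ) := by
  show ¬ (¬ Sat v φ ∧ ¬ Sat v ψ) ↔ _
  tauto

lemma sat_equiv (v : Val U) (φ ψ : Form U) : Sat v (Form.equiv φ ψ) ↔ (Sat v φ ↔ Sat v ψ) := by
  show Sat v (Form.impl φ ψ) ∧ Sat v (Form.impl ψ φ) ↔ _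
  rw [sat_impl, sat_impl]
  exact iff_iff_implies_and_implies.symm

lemma sat_conjList (v : Val U) : ∀ L : List (Form U), Sat v (conjList L) ↔ ∀ φ ∈ L, Sat v φ
  | [] => by simpa [conjList] using sat_top v
  | φ :: L => by
    show Sat v φ ∧ Sat v (conjList L) ↔ _
    rw [sat_conjList v L, List.forall_mem_cons]

lemma sat_disjList (v : Val U) : ∀ L : List (Form U), Sat v (disjList L) ↔ ∃ φ ∈ L, Sat v φ
  | [] => by simpa [disjList] using sat_falsum v
  | φ :: L => by
    show Sat v (Form.disj φ (disjList L)) ↔ _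
    rw [sat_disj, sat_disjList v L, List.exists_mem_cons_iff]

lemma mem_enum [Fintype U] (x : U) : x ∈ enum U := by simp [enum]

lemma sat_bigConj [Fintype U] (v : Val U) (f : U → Form U) :
    Sat v (bigConj f) ↔ ∀ x, Sat v (f x) := by
  simp only [bigConj, sat_conjList, List.forall_mem_map, mem_enum, true_implies]

lemma sat_bigDisj [Fintype U] (v : Val U) (f : U → Form U) :
    Sat v (bigDisj f) ↔ ∃ x, Sat v (f x) := by
  simp [bigDisj, sat_disjList, mem_enum]

lemma rel_skip (v w : Val U) : Rel Prog.skip v w ↔ w = v := by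
  show w = v ∧ Sat v Form.top ↔ _
  simp only [sat_top, and_true]

lemma rel_vary : ∀ (L : List (PVar U)) (v w : Val U),
    Rel (vary L) v w ↔ ∀ p ∉ L, (p ∈ w ↔ p ∈ v)
  | [], v, w => by
    rw [vary, seqList, rel_skip, Set.ext_iff]
    simp only [List.not_mem_nil, not_false_eq_true, true_implies]
  | q :: L, v, w => by
    show (∃ u, (u = v ∪ {q} ∨ u = v \ {q}) ∧ Rel (vary L) u w) ↔ _
    simp only [exists_eq_or_imp, exists_eq_left, rel_vary L, List.mem_cons, not_or, and_imp]
    constructor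
    · rintro (h | h) p hpq hpL <;> simpa [hpq] using h p hpL
    · intro h
      by_cases hq : q ∈ w
      · left
        intro p hp
        by_cases hpq : p = q
        · simp [hpq, hq]
        · simpa [hpq] using h p hpq hp
      · right
        intro p hp
        by_cases hpq : p = q
        · simp [hpq, hq]
        · simpa [hpq] using h p hpq hp

lemma mem_INlist [Fintype U] {p : PVar U} : p ∈ INlist U ↔ ∃ x, PVar.inn x = p := by
  simp [INlist, mem_enum]

def AgreeOffIN (v w : Val U) : Prop := ∀ p, (∀ x, PVar.inn x ≠ p) → (p ∈ v ↔ p ∈ w)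

lemma rel_makeExt [Fintype U] (φ : Form U) (v w : Val U) :
    Rel (makeExt U φ) v w ↔ AgreeOffIN w v ∧ Sat w φ := by
  show (∃ u, Rel (vary (INlist U)) v u ∧ (w = u ∧ Sat u φ)) ↔ _
  simp only [rel_vary, mem_INlist, not_exists, AgreeOffIN]
  constructor
  · rintro ⟨u, hu, rfl, hsat⟩
    exact ⟨hu, hsat⟩
  · rintro ⟨hw, hsat⟩
    exact ⟨w, hw, rfl, hsat⟩

end Semantics

section Argumentation

lemma isStableExt_iff {A E : Set U} {R : Set (U × U)} :
    IsStableExt A R E ↔ E ⊆ A ∧ ∀ x ∈ A, (x ∈ E ↔ ¬ ∃ y ∈ E, (y, x) ∈ R) := by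
  simp only [IsStableExt, IsConflictFree, attacked, Set.eq_empty_iff_forall_notMem,
    Set.subset_def, Set.mem_inter_iff, Set.mem_sdiff, Set.mem_sep_iff]
  constructor
  · rintro ⟨⟨hEA, hcf⟩, hst⟩
    refine ⟨hEA, fun x hx => ⟨fun hxE hatt => hcf x ⟨hxE, hEA x hxE, hatt⟩, fun hatt => ?_⟩⟩
    by_contra hxE
    exact hatt (hst x ⟨hx, hxE⟩).2
  · rintro ⟨hEA, hfix⟩
    refine ⟨⟨hEA, fun x ⟨hxE, hx, hatt⟩ => (hfix x hx).1 hxE hatt⟩, fun x ⟨hx, hxE⟩ => ⟨hx, ?_⟩⟩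
    by_contra hatt
    exact hxE ((hfix x hx).2 hatt)

lemma mem_Rv_iff {v : Val U} {x y : U} (hx : x ∈ Av v) (hy : y ∈ Av v) :
    (x, y) ∈ Rv v ↔ PVar.att x y ∈ v :=
  ⟨fun h => h.2.2, fun h => ⟨hx, hy, h⟩⟩

lemma sat_StableF [Fintype U] (v : Val U) :
    Sat v (StableF U) ↔ Ev v ⊆ Av v ∧
      ∀ x ∈ Av v, (x ∈ Ev v ↔ ¬ ∃ y ∈ Ev v, PVar.att y x ∈ v) := by
  simp only [StableF, Well, sat_conj, sat_bigConj, sat_impl, sat_equiv, sat_neg, sat_bigDisj,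
    sat_var]
  rfl

theorem sat_StableF_iff_isStableExt [Fintype U] (v : Val U) :
    Sat v (StableF U) ↔ IsStableExt (Av v) (Rv v) (Ev v) := by
  rw [sat_StableF, isStableExt_iff]
  refine and_congr_right fun hEA => forall₂_congr fun x hx => iff_congr Iff.rfl (not_congr ?_)
  exact exists_congr fun y => and_congr_right fun hy => (mem_Rv_iff (hEA hy) hx).symm

end Argumentation

section Realization

lemma aw_mem_valOf {A : Set U} {R : Set (U × U)} {x : U} : PVar.aw x ∈ valOf A R ↔ x ∈ A := by
  simp [valOf]

lemma att_mem_valOf {A : Set U} {R : Set (U × U)} {x y : U} :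
    PVar.att x y ∈ valOf A R ↔ (x, y) ∈ R := by
  simp [valOf]

lemma inn_notMem_valOf {A : Set U} {R : Set (U × U)} {x : U} : PVar.inn x ∉ valOf A R := by
  simp [valOf]

lemma Av_Rv_eq_of_agreeOffIN {A : Set U} {R : Set (U × U)} (hR : R ⊆ A ×ˢ A) {v : Val U}
    (hv : AgreeOffIN v (valOf A R)) : Av v = A ∧ Rv v = R := by
  have hA : Av v = A := Set.ext fun x => (hv _ (by simp)).trans aw_mem_valOf
  refine ⟨hA, Set.ext fun ⟨x, y⟩ => ?_⟩
  show x ∈ Av v ∧ y ∈ Av v ∧ PVar.att x y ∈ v ↔ _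
  rw [hA, hv _ (by simp), att_mem_valOf]
  exact ⟨fun h => h.2.2, fun h => ⟨(hR h).1, (hR h).2, h⟩⟩

lemma agreeOffIN_valOf_union_image_inn (A E : Set U) (R : Set (U × U)) :
    AgreeOffIN (valOf A R ∪ PVar.inn '' E) (valOf A R) := by
  rintro p hp
  simp only [Set.mem_union, Set.mem_image, or_iff_left_iff_imp]
  rintro ⟨x, -, rfl⟩
  exact absurd rfl (hp x)

lemma Ev_valOf_union_image_inn (A E : Set U) (R : Set (U × U)) :
    Ev (valOf A R ∪ PVar.inn '' E) = E := by
  ext x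
  simp [Ev, inn_notMem_valOf]

theorem isStableExt_eq_makeExt_image [Fintype U] {A : Set U} {R : Set (U × U)}
    (hR : R ⊆ A ×ˢ A) :
    {E | IsStableExt A R E} =
      {E | ∃ v : Val U, Rel (makeExt U (StableF U)) (valOf A R) v ∧ E = Ev v} := by
  ext E
  constructor
  · intro hE
    have hagree := agreeOffIN_valOf_union_image_inn A E R
    obtain ⟨hA, hRv⟩ := Av_Rv_eq_of_agreeOffIN hR hagree
    have hEv := Ev_valOf_union_image_inn A E R
    refine ⟨_, (rel_makeExt _ _ _).2 ⟨hagree, ?_⟩, hEv.symm⟩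
    rwa [sat_StableF_iff_isStableExt, hA, hRv, hEv]
  · rintro ⟨v, hrel, rfl⟩
    obtain ⟨hagree, hsat⟩ := (rel_makeExt _ _ _).1 hrel
    obtain ⟨hA, hRv⟩ := Av_Rv_eq_of_agreeOffIN hR hagree
    rwa [sat_StableF_iff_isStableExt, hA, hRv] at hsat

end Realization

end DLPA

open DLPA in
/-- Theorem 1 for the stable semantics. -/
theorem thm1_stable
    (U : Type) [Fintype U] [Nonempty U] :
    (∀ v : Val U, Sat v (StableF U) ↔ IsStableExt (Av v) (Rv v) (Ev v)) ∧
    (∀ (A : Set U) (R : Set (U × U)), R ⊆ A ×ˢ A →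
      {E | IsStableExt A R E} =
        {E | ∃ v : Val U, Rel (makeExt U (StableF U)) (valOf A R) v ∧ E = Ev v}) :=
  ⟨sat_StableF_iff_isStableExt, fun _ _ => isStableExt_eq_makeExt_image⟩
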